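/- Let μ be a probability measure on ℝ with finite first moment. Then the Call function is the Fenchel dual of λ ↦ λ·AVaR_μ(λ): for every K ∈ ℝ, C_μ(K) = sup_{λ ∈ (0,1)} ( λ·AVaR_μ(λ) − λK ). -/

import Mathlib

open MeasureTheory Set Filter Topology

/-- Tail function `μ([x,∞))`. -/
noncomputable def tailFn (μ : Measure ℝ) (x : ℝ) : ℝ := (μ (Ici x)).toReal

/-- Tail quantile function: left-continuous inverse of the tail function. -/
noncomputable def tailQ (μ : Measure ℝ) (l : ℝ) : ℝ := sInf {x : ℝ | tailFn μ x < l}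

/-- Call function `C_μ(K) = ∫ (s-K)⁺ μ(ds)`. -/
noncomputable def callFn (μ : Measure ℝ) (K : ℝ) : ℝ := ∫ s, max (s - K) 0 ∂μ

/-- Average Value at Risk at level `l`. -/
noncomputable def avar (μ : Measure ℝ) (l : ℝ) : ℝ := (1 / l) * ∫ u in (0 : ℝ)..l, tailQ μ u

/-- Hardy–Littlewood transform of `μ`: the law of `AVaR_μ(ξ)` for `ξ` uniform on `[0,1]`. -/
noncomputable def hlTransform (μ : Measure ℝ) : Measure ℝ :=
  Measure.map (avar μ) (volume.restrict (Ioc (0 : ℝ) 1))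

/-!
The tail quantile `q = tailQ μ` is a Galois inverse of the tail function: for `u ∈ (0,1)`,
`x ≤ q u ↔ u ≤ μ [x, ∞)`. Hence `q` pushes the uniform law on `(0,1]` forward to `μ`, so that
`C_μ(K) = ∫₀¹ (q - K)⁺ = ∫₀ᵗ (q - K)` with `t = μ [K, ∞) ∈ [0,1]`, while
`λ AVaR_μ(λ) - λ K = ∫₀^λ (q - K) ≤ ∫₀¹ (q - K)⁺`. The supremum over the open interval `(0,1)` is
still `C_μ(K)` because `λ ↦ ∫₀^λ (q - K)` is continuous on `[0,1]`.
-/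

lemma intervalIntegral_eq_setIntegral_indicator_Iic {E : Type*} [NormedAddCommGroup E]
    [NormedSpace ℝ E] {ν : Measure ℝ} (f : ℝ → E) {a b l : ℝ} (hal : a ≤ l) (hlb : l ≤ b) :
    ∫ u in a..l, f u ∂ν = ∫ u in Ioc a b, (Iic l).indicator f u ∂ν := by
  rw [intervalIntegral.integral_of_le hal, setIntegral_indicator measurableSet_Iic,
    Ioc_inter_Iic, min_eq_right hlb]

lemma iSup_Ioo_eq_of_continuousOn {f : ℝ → ℝ} {a b c x₀ : ℝ} (hab : a < b)
    (hf : ContinuousOn f (Icc a b)) (hle : ∀ x ∈ Ioo a b, f x ≤ c) (hx₀ : x₀ ∈ Icc a b)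
    (hfx₀ : f x₀ = c) : ⨆ x : Ioo a b, f x = c := by
  have : Nonempty (Ioo a b) := (nonempty_Ioo.mpr hab).to_subtype
  refine le_antisymm (ciSup_le fun x => hle x x.2) ?_
  have hbdd : BddAbove (range fun x : Ioo a b => f x) :=
    ⟨c, by rintro _ ⟨x, rfl⟩; exact hle x x.2⟩
  rw [← hfx₀]
  refine ContinuousWithinAt.closure_le (closure_Ioo hab.ne ▸ hx₀)
    ((hf x₀ hx₀).mono Ioo_subset_Icc_self) continuousWithinAt_const fun x hx => ?_
  exact le_ciSup hbdd ⟨x, hx⟩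

section TailQuantile

variable {μ : Measure ℝ}

lemma tailFn_nonneg (x : ℝ) : 0 ≤ tailFn μ x := ENNReal.toReal_nonneg

section Finite

variable [IsFiniteMeasure μ]

lemma tailFn_antitone : Antitone (tailFn μ) := fun _ _ hxy =>
  ENNReal.toReal_mono (measure_ne_top μ _) (measure_mono (Ici_subset_Ici.mpr hxy))

lemma ofReal_tailFn (x : ℝ) : ENNReal.ofReal (tailFn μ x) = μ (Ici x) :=
  ENNReal.ofReal_toReal (measure_ne_top μ _)

lemma tendsto_tailFn_atTop : Tendsto (tailFn μ) atTop (𝓝 0) := by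
  have hempty : ⋂ x : ℝ, Ici x = ∅ :=
    eq_empty_of_forall_notMem fun y hy => (lt_add_one y).not_ge (mem_iInter.mp hy (y + 1))
  have h := tendsto_measure_iInter_atTop (μ := μ) (fun _ => measurableSet_Ici.nullMeasurableSet)
    (fun _ _ hxy => Ici_subset_Ici.mpr hxy) ⟨0, measure_ne_top μ _⟩
  rw [hempty, measure_empty] at h
  have h' := (ENNReal.tendsto_toReal ENNReal.zero_ne_top).comp h
  rwa [ENNReal.toReal_zero] at h'

lemma tendsto_tailFn_sub_nhdsGT (x : ℝ) :
    Tendsto (fun r => tailFn μ (x - r)) (𝓝[>] 0) (𝓝 (tailFn μ x)) := by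
  have hinter : ⋂ r > (0 : ℝ), Ici (x - r) = Ici x := by
    ext y
    simp only [mem_iInter, mem_Ici]
    exact ⟨fun h => le_of_forall_pos_le_add fun r hr => by linarith [h r hr],
      fun h r hr => by linarith⟩
  have h := tendsto_measure_biInter_gt (μ := μ) (s := fun r => Ici (x - r)) (a := 0)
    (fun _ _ => measurableSet_Ici.nullMeasurableSet)
    (fun _ _ _ hij => Ici_subset_Ici.mpr (by linarith)) ⟨1, one_pos, measure_ne_top μ _⟩
  rw [hinter] at h
  exact (ENNReal.tendsto_toReal (measure_ne_top μ _)).comp h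

end Finite

variable [IsProbabilityMeasure μ]

lemma tailFn_le_one (x : ℝ) : tailFn μ x ≤ 1 := measureReal_le_one

lemma tendsto_tailFn_atBot : Tendsto (tailFn μ) atBot (𝓝 1) := by
  have h := (ENNReal.tendsto_toReal (measure_ne_top μ univ)).comp (tendsto_measure_Ici_atBot μ)
  rwa [measure_univ, ENNReal.toReal_one] at h

lemma bddBelow_setOf_tailFn_lt {u : ℝ} (hu : u < 1) : BddBelow {x | tailFn μ x < u} := by
  obtain ⟨y, hy⟩ := ((tendsto_tailFn_atBot (μ := μ)).eventually_const_lt hu).exists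
  exact ⟨y, fun z hz => le_of_not_gt fun hzy =>
    (hy.trans_le (tailFn_antitone (μ := μ) hzy.le)).not_gt hz⟩

lemma le_tailQ_iff {u x : ℝ} (hu : u ∈ Ioo 0 1) : x ≤ tailQ μ u ↔ u ≤ tailFn μ x := by
  constructor
  · intro hx
    by_contra! hxu
    -- `tailFn μ` is left-continuous, so it stays below `u` slightly to the left of `x`.
    obtain ⟨r, hr, hr0⟩ := (((tendsto_tailFn_sub_nhdsGT x).eventually_lt_const hxu).and
      self_mem_nhdsWithin).exists
    have : tailQ μ u ≤ x - r := csInf_le (bddBelow_setOf_tailFn_lt hu.2) hr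
    linarith [hr0]
  · intro hx
    obtain ⟨y, hy⟩ := ((tendsto_tailFn_atTop (μ := μ)).eventually_lt_const hu.1).exists
    exact le_csInf ⟨y, hy⟩ fun z hz =>
      le_of_not_gt fun hzx => (hz.trans_le hx).not_ge (tailFn_antitone (μ := μ) hzx.le)

lemma antitoneOn_tailQ : AntitoneOn (tailQ μ) (Ioo 0 1) := fun _ hu _ hv huv =>
  (le_tailQ_iff hu).mpr (huv.trans ((le_tailQ_iff hv).mp le_rfl))

lemma ae_le_tailQ_iff (x : ℝ) :
    ∀ᵐ u ∂volume.restrict (Ioc 0 1), x ≤ tailQ μ u ↔ u ≤ tailFn μ x := by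
  rw [← Measure.restrict_congr_set Ioo_ae_eq_Ioc]
  filter_upwards [ae_restrict_mem measurableSet_Ioo] with u hu using le_tailQ_iff hu

lemma aemeasurable_tailQ : AEMeasurable (tailQ μ) (volume.restrict (Ioc 0 1)) := by
  rw [← Measure.restrict_congr_set Ioo_ae_eq_Ioc]
  exact aemeasurable_restrict_of_antitoneOn measurableSet_Ioo antitoneOn_tailQ

lemma map_tailQ_volume_restrict_Ioc : (volume.restrict (Ioc 0 1)).map (tailQ μ) = μ := by
  refine Measure.ext_of_Ici _ _ fun x => ?_
  have hpre : tailQ μ ⁻¹' Ici x =ᵐ[volume.restrict (Ioc 0 1)] Iic (tailFn μ x) :=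
    eventuallyEq_set.mpr (ae_le_tailQ_iff x)
  rw [Measure.map_apply_of_aemeasurable aemeasurable_tailQ measurableSet_Ici, measure_congr hpre,
    Measure.restrict_apply measurableSet_Iic, inter_comm, Ioc_inter_Iic,
    min_eq_right (tailFn_le_one x), Real.volume_Ioc, sub_zero, ofReal_tailFn]

lemma integral_comp_tailQ {E : Type*} [NormedAddCommGroup E] [NormedSpace ℝ E] {f : ℝ → E}
    (hf : AEStronglyMeasurable f μ) : ∫ u in Ioc 0 1, f (tailQ μ u) = ∫ s, f s ∂μ := by
  rw [← integral_map aemeasurable_tailQ ((map_tailQ_volume_restrict_Ioc (μ := μ)).symm ▸ hf),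
    map_tailQ_volume_restrict_Ioc]

lemma integrableOn_tailQ (hμ : Integrable id μ) : IntegrableOn (tailQ μ) (Ioc 0 1) :=
  ((map_tailQ_volume_restrict_Ioc (μ := μ)).symm ▸ hμ : Integrable id _).comp_aemeasurable
    aemeasurable_tailQ

lemma integrableOn_tailQ_sub (hμ : Integrable id μ) (K : ℝ) :
    IntegrableOn (fun u => tailQ μ u - K) (Ioc 0 1) :=
  (integrableOn_tailQ hμ).sub (integrableOn_const measure_Ioc_lt_top.ne)

lemma callFn_eq_integral_tailQ (K : ℝ) :
    callFn μ K = ∫ u in Ioc 0 1, max (tailQ μ u - K) 0 :=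
  (integral_comp_tailQ
    (by fun_prop : Continuous fun s => max (s - K) 0).aestronglyMeasurable).symm

lemma callFn_eq_intervalIntegral_tailQ (K : ℝ) :
    callFn μ K = ∫ u in 0..tailFn μ K, (tailQ μ u - K) := by
  rw [callFn_eq_integral_tailQ,
    intervalIntegral_eq_setIntegral_indicator_Iic _ (tailFn_nonneg K) (tailFn_le_one K)]
  refine integral_congr_ae ?_
  filter_upwards [ae_le_tailQ_iff (μ := μ) K] with u hu
  by_cases h : u ≤ tailFn μ K
  · simp [indicator_of_mem (mem_Iic.mpr h), hu.mpr h]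
  · have hqK : tailQ μ u < K := not_le.mp (mt hu.mp h)
    simp [indicator_of_notMem (notMem_Iic.mpr (not_le.mp h)), hqK.le]

lemma intervalIntegral_tailQ_sub_le_callFn (hμ : Integrable id μ) (K : ℝ) {l : ℝ}
    (hl : l ∈ Icc 0 1) : ∫ u in 0..l, (tailQ μ u - K) ≤ callFn μ K := by
  have hint := integrableOn_tailQ_sub hμ K
  rw [callFn_eq_integral_tailQ, intervalIntegral_eq_setIntegral_indicator_Iic _ hl.1 hl.2]
  refine integral_mono (hint.indicator measurableSet_Iic) hint.pos_part fun u => ?_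
  by_cases h : u ∈ Iic l
  · simp [indicator_of_mem h]
  · simp [indicator_of_notMem h]

lemma mul_avar_sub_mul_eq (hμ : Integrable id μ) (K : ℝ) {l : ℝ} (hl : l ∈ Ioc 0 1) :
    l * avar μ l - l * K = ∫ u in 0..l, (tailQ μ u - K) := by
  have hint : IntervalIntegrable (tailQ μ) volume 0 l :=
    (intervalIntegrable_iff_integrableOn_Ioc_of_le hl.1.le).mpr
      ((integrableOn_tailQ hμ).mono_set (Ioc_subset_Ioc_right hl.2))
  rw [intervalIntegral.integral_sub hint intervalIntegrable_const, intervalIntegral.integral_const,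
    avar, smul_eq_mul, sub_zero]
  field_simp [hl.1.ne']

end TailQuantile

theorem stmt_6 (μ : Measure ℝ) [IsProbabilityMeasure μ] (hμ : Integrable id μ) :
    ∀ K : ℝ, callFn μ K = ⨆ l : Ioo (0 : ℝ) 1, ((l : ℝ) * avar μ l - (l : ℝ) * K) := by
  intro K
  have hint : IntervalIntegrable (fun u => tailQ μ u - K) volume 0 1 :=
    (intervalIntegrable_iff_integrableOn_Ioc_of_le zero_le_one).mpr
      (integrableOn_tailQ_sub hμ K)
  have hcont : ContinuousOn (fun l => ∫ u in 0..l, (tailQ μ u - K)) (Icc 0 1) := by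
    simpa [uIcc_of_le zero_le_one] using
      intervalIntegral.continuousOn_primitive_interval' hint left_mem_uIcc
  rw [iSup_congr fun l : Ioo (0 : ℝ) 1 => mul_avar_sub_mul_eq hμ K (Ioo_subset_Ioc_self l.2)]
  exact (iSup_Ioo_eq_of_continuousOn zero_lt_one hcont
    (fun l hl => intervalIntegral_tailQ_sub_le_callFn hμ K (Ioo_subset_Icc_self hl))
    ⟨tailFn_nonneg K, tailFn_le_one K⟩ (callFn_eq_intervalIntegral_tailQ K).symm).symm
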